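/- Young-type Dirichlet form estimate used in the energy estimate. Let γ ∈ (0,2), b ∈ (0,1), let f be a density with respect to ν_b, let F : ℝ² → ℝ be a continuous function with compact support, let t be fixed, let ε > 0, n ≥ 1 be such that εn ≥ 1, and let A > 0. Then (1/2) · n^{γ−1} · Σ_{x,y ∈ ℤ : |x−y| ≥ εn} F(x/n, y/n) · p(y−x) · ∫_Ω η(y) · c̃_{x,y}(η) · ( f(η) − f(η^{x,y}) ) dν_b(η) ≤ 4 · n^{γ−1} · A · Σ_{x,y ∈ ℤ : |x−y| ≥ εn} F(x/n, y/n)² · p(y−x) + (n^{γ−1}/A) · 𝒟(√f, ν_b). -/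

import Mathlib

open MeasureTheory Filter Set ENNReal

/-- Normalizing constant `c_γ = (Σ_{z ≠ 0} |z|^{-γ-1})⁻¹`. -/
noncomputable def cGamma (γ : ℝ) : ℝ :=
  (∑' z : ℤ, if z = 0 then 0 else |(z : ℝ)| ^ (-γ - 1))⁻¹

/-- Transition probability `p(z) = c_γ |z|^{-γ-1}` for `z ≠ 0`, `p(0) = 0`. -/
noncomputable def transP (γ : ℝ) (z : ℤ) : ℝ :=
  if z = 0 then 0 else cGamma γ * |(z : ℝ)| ^ (-γ - 1)

/-- The space of test functions `𝒮 = P([0,T], C_c^∞(ℝ))`: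
functions of the form `G(t,u) = Σ_{j=0}^k t^j G_j(u)` with `G_j` smooth compactly supported. -/
def IsTestS (G : ℝ → ℝ → ℝ) : Prop :=
  ∃ k : ℕ, ∃ Gj : ℕ → ℝ → ℝ,
    (∀ j ≤ k, ContDiff ℝ (⊤ : ℕ∞) (Gj j) ∧ HasCompactSupport (Gj j)) ∧
    ∀ t u : ℝ, G t u = ∑ j ∈ Finset.range (k + 1), t ^ j * Gj j u

/-- The fractional Laplacian `-(-Δ)^{γ/2}` of a function `G : ℝ → ℝ`, defined as
`c_γ · lim_{ε → 0⁺} ∫_{|u-v| ≥ ε} (G(v) - G(u))/|u-v|^{1+γ} dv`. -/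
noncomputable def fracLap (γ : ℝ) (G : ℝ → ℝ) (u : ℝ) : ℝ :=
  cGamma γ * limUnder (nhdsWithin 0 (Set.Ioi 0))
    (fun ε : ℝ => ∫ v in {v : ℝ | ε ≤ |u - v|}, (G v - G u) / |u - v| ^ (1 + γ))

/-- The configuration space `Ω = {0,1}^ℤ`, with `true` meaning an occupied site. -/
abbrev Config := ℤ → Bool

/-- The configuration `η^{x,y}` obtained from `η` by exchanging the values at `x` and `y`. -/
def swapConf (x y : ℤ) (η : Config) : Config :=
  fun z => if z = x then η y else if z = y then η x else η z

/-- Occupation number `η(x) ∈ {0,1}` as a real number. -/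
def ind (b : Bool) : ℝ := if b then 1 else 0

/-- The kinetic constraint `c̃_{x,y}(η) = η(x-1) + η(x+1) + η(y-1) + η(y+1)`. -/
noncomputable def ctilde (x y : ℤ) (η : Config) : ℝ :=
  ind (η (x - 1)) + ind (η (x + 1)) + ind (η (y - 1)) + ind (η (y + 1))

/-- `ν` is the Bernoulli product measure with parameter `b` on `Ω = {0,1}^ℤ`:
a probability measure whose cylinder sets have the i.i.d. Bernoulli(`b`) probabilities. -/
def IsBernoulliProduct (b : ℝ) (ν : MeasureTheory.Measure Config) : Prop :=
  MeasureTheory.IsProbabilityMeasure ν ∧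
    ∀ (s : Finset ℤ) (a : ℤ → Bool),
      ν {η : Config | ∀ x ∈ s, η x = a x} =
        ∏ x ∈ s, ENNReal.ofReal (if a x then b else 1 - b)

/-- The Dirichlet form `𝒟(√f, ν_b) = (1/4) Σ_{x,y} p(x-y) I_{x,y}(√f, ν_b)`, where
`I_{x,y}(√f, ν_b) = ∫ c̃_{x,y}(η) (√f(η^{x,y}) - √f(η))² dν_b`. -/
noncomputable def dirichletForm (γ : ℝ) (ν : MeasureTheory.Measure Config)
    (f : Config → ℝ) : ℝ≥0∞ :=
  (1 / 4) * ∑' q : ℤ × ℤ, ENNReal.ofReal (transP γ (q.1 - q.2)) *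
    ∫⁻ η, ENNReal.ofReal (ctilde q.1 q.2 η *
      (Real.sqrt (f (swapConf q.1 q.2 η)) - Real.sqrt (f η)) ^ 2) ∂ν

-- basic lemmas
lemma swapConf_eq (x y : ℤ) (η : Config) (z : ℤ) :
    swapConf x y η z = η (Equiv.swap x y z) := by
  simp only [swapConf, Equiv.swap_apply_def]
  split_ifs <;> rfl

lemma swapConf_involutive (x y : ℤ) : Function.Involutive (swapConf x y) := by
  intro η; funext z
  simp only [swapConf_eq, Equiv.swap_apply_self]

lemma measurable_swapConf (x y : ℤ) : Measurable (swapConf x y) := by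
  apply measurable_pi_lambda
  intro z
  simp only [swapConf_eq]
  exact measurable_pi_apply _

/-- swap as a measurable equiv -/
noncomputable def swapEquiv (x y : ℤ) : Config ≃ᵐ Config where
  toFun := swapConf x y
  invFun := swapConf x y
  left_inv := swapConf_involutive x y
  right_inv := swapConf_involutive x y
  measurable_toFun := measurable_swapConf x y
  measurable_invFun := measurable_swapConf x y

lemma ind_nonneg (b : Bool) : 0 ≤ ind b := by unfold ind; split <;> norm_num
lemma ind_le_one (b : Bool) : ind b ≤ 1 := by unfold ind; split <;> norm_num

lemma ctilde_nonneg (x y : ℤ) (η : Config) : 0 ≤ ctilde x y η := by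
  unfold ctilde
  have := ind_nonneg (η (x-1)); have := ind_nonneg (η (x+1))
  have := ind_nonneg (η (y-1)); have := ind_nonneg (η (y+1))
  linarith

lemma ctilde_le_four (x y : ℤ) (η : Config) : ctilde x y η ≤ 4 := by
  unfold ctilde
  have := ind_le_one (η (x-1)); have := ind_le_one (η (x+1))
  have := ind_le_one (η (y-1)); have := ind_le_one (η (y+1))
  linarith

lemma measurable_ind_eval (z : ℤ) : Measurable (fun η : Config => ind (η z)) :=
  (measurable_from_top (f := ind)).comp (measurable_pi_apply z)

lemma measurable_ctilde (x y : ℤ) : Measurable (ctilde x y) := by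
  unfold ctilde
  exact (((measurable_ind_eval _).add (measurable_ind_eval _)).add
    (measurable_ind_eval _)).add (measurable_ind_eval _)

-- transP facts
lemma cGamma_pos {γ : ℝ} (hγ : 0 < γ) : 0 < cGamma γ := by
  have hsum : Summable (fun z : ℤ => if z = 0 then 0 else |(z : ℝ)| ^ (-γ - 1)) := by
    have h := Real.summable_abs_int_rpow (b := γ + 1) (by linarith)
    refine h.congr fun z => ?_
    by_cases hz : z = 0
    · simp only [hz, if_pos, Int.cast_zero, abs_zero]
      rw [Real.zero_rpow (by linarith : -(γ+1) ≠ 0)]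
    · simp only [hz, if_false]; ring_nf
  have hpos : (0:ℝ) < ∑' z : ℤ, if z = 0 then 0 else |(z : ℝ)| ^ (-γ - 1) := by
    refine Summable.tsum_pos hsum (fun z => ?_) 1 ?_
    · by_cases hz : z = 0
      · simp [hz]
      · simp only [hz, if_false]
        positivity
    · norm_num
  exact inv_pos.mpr hpos

lemma transP_nonneg {γ : ℝ} (hγ : 0 < γ) (z : ℤ) : 0 ≤ transP γ z := by
  unfold transP
  split
  · exact le_refl _
  · exact mul_nonneg (cGamma_pos hγ).le (Real.rpow_nonneg (abs_nonneg _) _)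

lemma transP_pos {γ : ℝ} (hγ : 0 < γ) {z : ℤ} (hz : z ≠ 0) : 0 < transP γ z := by
  unfold transP
  rw [if_neg hz]
  have : (0:ℝ) < |(z:ℝ)| := abs_pos.mpr (Int.cast_ne_zero.mpr hz)
  exact mul_pos (cGamma_pos hγ) (Real.rpow_pos_of_pos this _)

lemma transP_neg (γ : ℝ) (z : ℤ) : transP γ (-z) = transP γ z := by
  unfold transP
  simp [neg_eq_zero]

/-- basic cylinder set -/
def basicCyl (s : Finset ℤ) (a : ℤ → Bool) : Set Config := {η : Config | ∀ x ∈ s, η x = a x}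

lemma measurableSet_basicCyl (s : Finset ℤ) (a : ℤ → Bool) :
    MeasurableSet (basicCyl s a) := by
  have : basicCyl s a = ⋂ x ∈ (s : Set ℤ), (fun η : Config => η x) ⁻¹' {a x} := by
    ext η; simp [basicCyl]
  rw [this]
  exact MeasurableSet.biInter (s.countable_toSet) fun x _ =>
    (measurable_pi_apply x) (by trivial)

lemma swap_preimage_basicCyl (x y : ℤ) (s : Finset ℤ) (a : ℤ → Bool) :
    swapConf x y ⁻¹' basicCyl s a
      = basicCyl (s.image (Equiv.swap x y)) (a ∘ (Equiv.swap x y)) := by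
  ext η
  simp only [mem_preimage, basicCyl, mem_setOf_eq, Finset.mem_image, swapConf_eq,
    Function.comp_apply]
  constructor
  · rintro h w ⟨z, hz, rfl⟩
    rw [Equiv.swap_apply_self]
    exact h z hz
  · intro h z hz
    have := h (Equiv.swap x y z) ⟨z, hz, rfl⟩
    rwa [Equiv.swap_apply_self] at this

/-- measure of a basic cylinder preimage under swap equals its measure -/
lemma measure_swap_preimage_basicCyl {b : ℝ} {ν : Measure Config}
    (hν : IsBernoulliProduct b ν) (x y : ℤ) (s : Finset ℤ) (a : ℤ → Bool) :
    ν (swapConf x y ⁻¹' basicCyl s a) = ν (basicCyl s a) := by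
  rw [swap_preimage_basicCyl]
  have h1 := hν.2 (s.image (Equiv.swap x y)) (a ∘ (Equiv.swap x y))
  have h2 := hν.2 s a
  rw [show basicCyl (s.image (Equiv.swap x y)) (a ∘ (Equiv.swap x y))
    = {η : Config | ∀ z ∈ s.image (Equiv.swap x y), η z = (a ∘ (Equiv.swap x y)) z} from rfl, h1]
  rw [show basicCyl s a = {η : Config | ∀ z ∈ s, η z = a z} from rfl, h2]
  rw [Finset.prod_image (fun z _ w _ h => (Equiv.swap x y).injective h)]
  refine Finset.prod_congr rfl fun z _ => ?_
  simp [Equiv.swap_apply_self]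

lemma measurePreserving_swapConf {b : ℝ} {ν : Measure Config}
    (hν : IsBernoulliProduct b ν) (x y : ℤ) :
    MeasurePreserving (swapConf x y) ν ν := by
  classical
  have hmeas := measurable_swapConf x y
  refine ⟨hmeas, ?_⟩
  have : IsProbabilityMeasure ν := hν.1
  have hmap : IsProbabilityMeasure (ν.map (swapConf x y)) :=
    Measure.isProbabilityMeasure_map hmeas.aemeasurable
  refine ext_of_generate_finite (measurableCylinders (fun _ : ℤ => Bool))
    generateFrom_measurableCylinders.symm isPiSystem_measurableCylinders
    (fun t ht => ?_) (by simp)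
  obtain ⟨s, S, hS, rfl⟩ := (mem_measurableCylinders t).mp ht
  rw [Measure.map_apply hmeas hS.cylinder]
  -- decompose the cylinder into basic cylinders
  set T : Finset (s → Bool) := Finset.univ.filter (· ∈ S) with hT
  have hdecomp : cylinder s S = ⋃ g ∈ T, basicCyl s (fun z => if h : z ∈ s then g ⟨z, h⟩ else false) := by
    ext η
    simp only [mem_cylinder, mem_iUnion, basicCyl, mem_setOf_eq, hT, Finset.mem_filter,
      Finset.mem_univ, true_and, exists_prop]
    constructor
    · intro h
      exact ⟨s.restrict η, h, fun z hz => by simp [Finset.restrict, dif_pos hz]⟩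
    · rintro ⟨g, hg, h⟩
      have : s.restrict η = g := by
        funext i
        have := h i i.2
        simpa [Finset.restrict, dif_pos i.2] using this
      rwa [this]
  have hdisj : PairwiseDisjoint (↑T) (fun g : s → Bool =>
      basicCyl s (fun z => if h : z ∈ s then g ⟨z, h⟩ else false)) := by
    intro g₁ _ g₂ _ hne
    refine Set.disjoint_left.mpr fun η h₁ h₂ => hne ?_
    funext i
    have e₁ := h₁ i.1 i.2
    have e₂ := h₂ i.1 i.2
    simp only [dif_pos i.2] at e₁ e₂
    rw [← e₁, ← e₂]
  have hmeasb : ∀ g ∈ T, MeasurableSet (basicCyl s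
      (fun z => if h : z ∈ s then g ⟨z, h⟩ else false)) :=
    fun g _ => measurableSet_basicCyl _ _
  have hdisj' : PairwiseDisjoint (↑T) (fun g : s → Bool =>
      swapConf x y ⁻¹' basicCyl s (fun z => if h : z ∈ s then g ⟨z, h⟩ else false)) :=
    fun g₁ h₁ g₂ h₂ hne => Disjoint.preimage _ (hdisj h₁ h₂ hne)
  rw [hdecomp, preimage_iUnion₂,
    measure_biUnion_finset hdisj' (fun g hg => hmeas (hmeasb g hg)),
    measure_biUnion_finset hdisj hmeasb]
  exact Finset.sum_congr rfl fun g hg =>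
    measure_swap_preimage_basicCyl hν x y s _

lemma young_ineq {A : ℝ} (hA : 0 < A) (X Y : ℝ) :
    X * Y ≤ (A/2)*X^2 + (1/(2*A))*Y^2 := by
  have h : (A/2)*X^2 + (1/(2*A))*Y^2 - X*Y = (1/(2*A)) * (A*X - Y)^2 := by
    field_simp; ring
  nlinarith [mul_nonneg (by positivity : (0:ℝ) ≤ 1/(2*A)) (sq_nonneg (A*X - Y))]

lemma core_ineq {b A : ℝ} {ν : Measure Config} (hν : IsBernoulliProduct b ν) (hA : 0 < A)
    (x y : ℤ) {f : Config → ℝ} (hf : Measurable f) (hf0 : ∀ η, 0 ≤ f η)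
    (hf1 : (∫ η, f η ∂ν) = 1)
    (hg : Integrable (fun η => ctilde x y η *
      (Real.sqrt (f (swapConf x y η)) - Real.sqrt (f η))^2) ν) (r : ℝ) :
    (1/2) * (r * ∫ η, ind (η y) * ctilde x y η * (f η - f (swapConf x y η)) ∂ν)
      ≤ 4*A*r^2 + (1/(4*A)) *
        ∫ η, ctilde x y η * (Real.sqrt (f (swapConf x y η)) - Real.sqrt (f η))^2 ∂ν := by
  have hmp := measurePreserving_swapConf hν x y
  have : IsProbabilityMeasure ν := hν.1
  have hfint : Integrable f ν := by
    by_contra h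
    rw [integral_undef h] at hf1; norm_num at hf1
  have hfs : Integrable (fun η => f (swapConf x y η)) ν :=
    (hmp.integrable_comp_emb (swapEquiv x y).measurableEmbedding).mpr hfint
  have hfs1 : (∫ η, f (swapConf x y η) ∂ν) = 1 := by
    rw [hmp.integral_comp (swapEquiv x y).measurableEmbedding]; exact hf1
  set φ : Config → ℝ := fun η => ind (η y) * ctilde x y η * (f η - f (swapConf x y η)) with hφdef
  have hφmeas : Measurable φ := by
    exact ((measurable_ind_eval y).mul (measurable_ctilde x y)).mul
      (hf.sub (hf.comp (measurable_swapConf x y)))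
  have hψ : Integrable (fun η => 4*(f η + f (swapConf x y η))) ν := by
    simpa using (hfint.add hfs).const_mul 4
  have hφ : Integrable φ ν := by
    refine Integrable.mono hψ hφmeas.aestronglyMeasurable ?_
    filter_upwards with η
    rw [Real.norm_eq_abs, Real.norm_eq_abs]
    have hi : |ind (η y)| ≤ 1 := by rw [abs_of_nonneg (ind_nonneg _)]; exact ind_le_one _
    have hc : |ctilde x y η| ≤ 4 := by
      rw [abs_of_nonneg (ctilde_nonneg x y η)]; exact ctilde_le_four x y η
    have hd : |f η - f (swapConf x y η)| ≤ f η + f (swapConf x y η) := by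
      have := abs_sub (f η) (f (swapConf x y η))
      rwa [abs_of_nonneg (hf0 η), abs_of_nonneg (hf0 _)] at this
    have h1 : |φ η| = |ind (η y)| * |ctilde x y η| * |f η - f (swapConf x y η)| := by
      rw [hφdef]; rw [abs_mul, abs_mul]
    rw [h1]
    have h2 : |ind (η y)| * |ctilde x y η| * |f η - f (swapConf x y η)|
        ≤ 1 * 4 * (f η + f (swapConf x y η)) :=
      mul_le_mul (mul_le_mul hi hc (abs_nonneg _) zero_le_one) hd (abs_nonneg _) (by norm_num)
    have h3 : (0:ℝ) ≤ f η + f (swapConf x y η) := by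
      have := hf0 η; have := hf0 (swapConf x y η); linarith
    rw [abs_of_nonneg (by positivity : (0:ℝ) ≤ 4 * (f η + f (swapConf x y η)))]
    linarith
  set g : Config → ℝ := fun η => ctilde x y η *
    (Real.sqrt (f (swapConf x y η)) - Real.sqrt (f η))^2 with hgdef
  set B : Config → ℝ := fun η => 2*A*r^2*(f η + f (swapConf x y η)) + (1/(4*A)) * g η
    with hBdef
  have hpt : ∀ η, ((1/2)*r) * φ η ≤ B η := by
    intro η
    set a := Real.sqrt (f η) with hadef
    set as := Real.sqrt (f (swapConf x y η)) with hasdef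
    set i := ind (η y)
    set c := ctilde x y η
    have ha2 : a^2 = f η := Real.sq_sqrt (hf0 η)
    have has2 : as^2 = f (swapConf x y η) := Real.sq_sqrt (hf0 _)
    have hi0 : 0 ≤ i := ind_nonneg _
    have hi1 : i ≤ 1 := ind_le_one _
    have hc0 : 0 ≤ c := ctilde_nonneg x y η
    have hc4 : c ≤ 4 := ctilde_le_four x y η
    have key := young_ineq hA (r*i*(a+as)) (a - as)
    have step1 : ((1/2)*r) * φ η = (c/2) * ((r*i*(a+as)) * (a - as)) := by
      simp only [hφdef, ← ha2, ← has2]; ring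
    have step2 : (c/2) * ((r*i*(a+as)) * (a - as))
        ≤ (c/2) * ((A/2)*(r*i*(a+as))^2 + (1/(2*A))*(a-as)^2) :=
      mul_le_mul_of_nonneg_left key (by positivity)
    have step3 : (c/2) * ((A/2)*(r*i*(a+as))^2 + (1/(2*A))*(a-as)^2)
        = (A/4)*(c*(r*i*(a+as))^2) + (1/(4*A))*(c*(a-as)^2) := by
      field_simp; ring
    have hisq : i^2 ≤ 1 := by nlinarith
    have e1 : (r*i*(a+as))^2 ≤ r^2*(2*(a^2+as^2)) := by
      have h2' : (r*i*(a+as))^2 = i^2 * (r*(a+as))^2 := by ring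
      have h3' : i^2 * (r*(a+as))^2 ≤ 1 * (r*(a+as))^2 :=
        mul_le_mul_of_nonneg_right hisq (sq_nonneg _)
      have h4' : (r*(a+as))^2 ≤ r^2*(2*(a^2+as^2)) := by nlinarith [sq_nonneg (r*(a-as))]
      linarith
    have e2 : (A/4)*(c*(r*i*(a+as))^2) ≤ 2*A*r^2*(a^2+as^2) := by
      have : c*(r*i*(a+as))^2 ≤ 4*(r^2*(2*(a^2+as^2))) :=
        mul_le_mul hc4 e1 (sq_nonneg _) (by norm_num)
      have := mul_le_mul_of_nonneg_left this (by positivity : (0:ℝ) ≤ A/4)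
      linarith
    have ha0 : 0 ≤ a := hadef ▸ Real.sqrt_nonneg _
    have has0 : 0 ≤ as := hasdef ▸ Real.sqrt_nonneg _
    have e3 : B η = 2*A*r^2*(a^2+as^2) + (1/(4*A))*(c*(as-a)^2) := by
      simp only [hBdef, hgdef, ← ha2, ← has2, Real.sqrt_sq ha0, Real.sqrt_sq has0]
      rfl
    have e4 : (as-a)^2 = (a-as)^2 := by ring
    rw [step1, e3, e4]
    linarith
  have hBint : Integrable B ν :=
    ((hfint.add hfs).const_mul (2*A*r^2)).add (hg.const_mul (1/(4*A)))
  have hmono : ∫ η, ((1/2)*r) * φ η ∂ν ≤ ∫ η, B η ∂ν :=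
    integral_mono (hφ.const_mul _) hBint hpt
  have hL : ∫ η, ((1/2)*r) * φ η ∂ν = (1/2) * (r * ∫ η, φ η ∂ν) := by
    rw [integral_const_mul]; ring
  have hR : ∫ η, B η ∂ν = 4*A*r^2 + (1/(4*A)) * ∫ η, g η ∂ν := by
    rw [hBdef]
    simp only
    have h1 : Integrable (fun η => 2*A*r^2*(f η + f (swapConf x y η))) ν := by
      simpa using (hfint.add hfs).const_mul (2*A*r^2)
    rw [integral_add h1 (hg.const_mul (1/(4*A))), integral_const_mul, integral_const_mul]
    have h2 : ∫ η, (f η + f (swapConf x y η)) ∂ν = 2 := by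
      rw [integral_add hfint hfs, hf1, hfs1]; norm_num
    rw [h2]
    ring
  rw [hL, hR] at hmono
  exact hmono

lemma ofReal_sum_le {ι : Type*} (s : Finset ι) (f : ι → ℝ) :
    ENNReal.ofReal (∑ i ∈ s, f i) ≤ ∑ i ∈ s, ENNReal.ofReal (f i) := by
  classical
  induction s using Finset.induction with
  | empty => simp
  | insert _ _ h ih =>
    rw [Finset.sum_insert h, Finset.sum_insert h]
    exact ENNReal.ofReal_add_le.trans (add_le_add le_rfl ih)

noncomputable def Jq (ν : Measure Config) (f : Config → ℝ) (q : ℤ × ℤ) : ℝ :=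
  ∫ η, ind (η q.2) * ctilde q.1 q.2 η * (f η - f (swapConf q.1 q.2 η)) ∂ν

noncomputable def Lq (ν : Measure Config) (f : Config → ℝ) (q : ℤ × ℤ) : ℝ≥0∞ :=
  ∫⁻ η, ENNReal.ofReal (ctilde q.1 q.2 η *
    (Real.sqrt (f (swapConf q.1 q.2 η)) - Real.sqrt (f η)) ^ 2) ∂ν

noncomputable def TT (γ ε : ℝ) (n : ℕ) (ν : Measure Config) (f : Config → ℝ)
    (F : ℝ × ℝ → ℝ) (q : ℤ × ℤ) : ℝ :=
  if ε * n ≤ |(q.1 : ℝ) - (q.2 : ℝ)| then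
    F ((q.1 : ℝ) / n, (q.2 : ℝ) / n) * transP γ (q.2 - q.1) * Jq ν f q
  else 0

noncomputable def GG (γ ε : ℝ) (n : ℕ) (F : ℝ × ℝ → ℝ) (q : ℤ × ℤ) : ℝ :=
  if ε * n ≤ |(q.1 : ℝ) - (q.2 : ℝ)| then
    F ((q.1 : ℝ) / n, (q.2 : ℝ) / n) ^ 2 * transP γ (q.2 - q.1)
  else 0

theorem master (γ b A ε : ℝ) (hγ : γ ∈ Set.Ioo (0 : ℝ) 2) (hb : b ∈ Set.Ioo (0 : ℝ) 1)
    (hA : 0 < A) (hε : 0 < ε) (n : ℕ) (hn : 1 ≤ n) (hεn : 1 ≤ ε * n)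
    (ν : MeasureTheory.Measure Config) (hν : IsBernoulliProduct b ν)
    (f : Config → ℝ) (hf : Measurable f) (hf0 : ∀ η : Config, 0 ≤ f η)
    (hf1 : (∫ η, f η ∂ν) = 1)
    (F : ℝ × ℝ → ℝ) (hF : Continuous F) (hFc : HasCompactSupport F) :
    ENNReal.ofReal ((1 / 2) * (n : ℝ) ^ (γ - 1) * ∑' q : ℤ × ℤ, TT γ ε n ν f F q)
    ≤ ENNReal.ofReal (4 * (n : ℝ) ^ (γ - 1) * A * ∑' q : ℤ × ℤ, GG γ ε n F q)
      + ENNReal.ofReal ((n : ℝ) ^ (γ - 1) / A) * dirichletForm γ ν f := by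
  classical
  have hγ0 : 0 < γ := hγ.1
  have hnpos : (0:ℝ) < n := by exact_mod_cast Nat.lt_of_lt_of_le Nat.zero_lt_one hn
  have hκ : 0 < (n:ℝ) ^ (γ - 1) := Real.rpow_pos_of_pos hnpos _
  set κ := (n:ℝ) ^ (γ - 1) with hκdef
  -- support finset
  obtain ⟨R, hR0, hR⟩ := hFc.exists_pos_le_norm
  set M : ℤ := ⌈R * n⌉ with hMdef
  set s₀ : Finset (ℤ × ℤ) := Finset.Icc (-M) M ×ˢ Finset.Icc (-M) M with hs₀
  have hFsupp : ∀ q : ℤ × ℤ, q ∉ s₀ → F ((q.1 : ℝ) / n, (q.2 : ℝ) / n) = 0 := by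
    intro q hq
    by_contra hFq
    apply hq
    have hnorm : ‖(((q.1 : ℝ) / n, (q.2 : ℝ) / n) : ℝ × ℝ)‖ < R :=
      lt_of_not_ge (fun h => hFq (hR _ h))
    have key : ∀ z : ℤ, |(z : ℝ)| / n < R → z ∈ Finset.Icc (-M) M := by
      intro z hz
      have h1 : |(z : ℝ)| < R * n := (div_lt_iff₀ hnpos).mp hz
      have h2 : |(z : ℝ)| ≤ (M : ℝ) := h1.le.trans (by exact_mod_cast Int.le_ceil (R * n))
      have h3 : |z| ≤ M := by
        have h4 : ((|z| : ℤ) : ℝ) ≤ (M : ℝ) := by rw [Int.cast_abs]; exact h2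
        exact_mod_cast h4
      rw [Finset.mem_Icc]
      exact abs_le.mp h3
    have h1 : |(q.1 : ℝ)| / n < R := by
      have h := (norm_fst_le (((q.1 : ℝ) / n, (q.2 : ℝ) / n))).trans_lt hnorm
      simpa [Real.norm_eq_abs] using h
    have h2 : |(q.2 : ℝ)| / n < R := by
      have h := (norm_snd_le (((q.1 : ℝ) / n, (q.2 : ℝ) / n))).trans_lt hnorm
      simpa [Real.norm_eq_abs] using h
    exact Finset.mem_product.mpr ⟨key _ h1, key _ h2⟩
  have hT0 : ∀ q : ℤ × ℤ, q ∉ s₀ → TT γ ε n ν f F q = 0 := by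
    intro q hq
    unfold TT
    rw [hFsupp q hq]
    simp
  have hG0 : ∀ q : ℤ × ℤ, q ∉ s₀ → GG γ ε n F q = 0 := by
    intro q hq
    unfold GG
    rw [hFsupp q hq]
    simp
  rw [tsum_eq_sum hT0, tsum_eq_sum hG0]
  -- pointwise key estimate
  have key : ∀ q : ℤ × ℤ,
      ENNReal.ofReal ((1/2) * κ * TT γ ε n ν f F q)
        ≤ ENNReal.ofReal (4 * κ * A * GG γ ε n F q)
          + ENNReal.ofReal (κ / A) *
            ((1/4) * (ENNReal.ofReal (transP γ (q.1 - q.2)) * Lq ν f q)) := by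
    intro q
    by_cases hcond : ε * n ≤ |(q.1 : ℝ) - (q.2 : ℝ)|
    swap
    · unfold TT
      rw [if_neg hcond]
      simp
    have hxy : q.2 - q.1 ≠ 0 := by
      intro h
      have : (q.1 : ℝ) = (q.2 : ℝ) := by exact_mod_cast (by omega : q.1 = q.2)
      rw [this, sub_self, abs_zero] at hcond
      linarith
    have hp : 0 < transP γ (q.2 - q.1) := transP_pos hγ0 hxy
    have hpe : transP γ (q.1 - q.2) = transP γ (q.2 - q.1) := by
      rw [show q.1 - q.2 = -(q.2 - q.1) by ring, transP_neg]
    by_cases hL : Lq ν f q = ⊤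
    · have htop : ENNReal.ofReal (κ / A) *
          ((1/4) * (ENNReal.ofReal (transP γ (q.1 - q.2)) * Lq ν f q)) = ⊤ := by
        rw [hL, hpe, ENNReal.mul_top (ENNReal.ofReal_pos.mpr hp).ne',
          ENNReal.mul_top (by norm_num),
          ENNReal.mul_top (ENNReal.ofReal_pos.mpr (div_pos hκ hA)).ne']
      rw [htop]
      exact le_top
    · -- finite case
      set gq : Config → ℝ := fun η => ctilde q.1 q.2 η *
        (Real.sqrt (f (swapConf q.1 q.2 η)) - Real.sqrt (f η)) ^ 2 with hgq
      have hgmeas : Measurable gq :=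
        (measurable_ctilde _ _).mul
          (((hf.comp (measurable_swapConf _ _)).sqrt.sub hf.sqrt).pow_const 2)
      have hg0 : ∀ η, 0 ≤ gq η := fun η =>
        mul_nonneg (ctilde_nonneg _ _ _) (sq_nonneg _)
      have hgint : Integrable gq ν := by
        refine ⟨hgmeas.aestronglyMeasurable, ?_⟩
        rw [hasFiniteIntegral_iff_ofReal (Eventually.of_forall hg0)]
        exact lt_top_iff_ne_top.mpr hL
      have hLe : Lq ν f q = ENNReal.ofReal (∫ η, gq η ∂ν) :=
        (ofReal_integral_eq_lintegral_ofReal hgint (Eventually.of_forall hg0)).symm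
      set r := F ((q.1 : ℝ) / n, (q.2 : ℝ) / n) with hr
      set I := ∫ η, gq η ∂ν with hI
      have hI0 : 0 ≤ I := integral_nonneg hg0
      have core := core_ineq hν hA q.1 q.2 hf hf0 hf1 hgint r
      -- real inequality
      have hreal : (1/2) * κ * TT γ ε n ν f F q
          ≤ 4 * κ * A * GG γ ε n F q + (κ / A) * ((1/4) * (transP γ (q.1 - q.2) * I)) := by
        unfold TT GG
        rw [if_pos hcond, if_pos hcond, hpe]
        set p := transP γ (q.2 - q.1) with hpdef
        have h := mul_le_mul_of_nonneg_left core (mul_nonneg hκ.le hp.le)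
        have e1 : (1/2) * κ * (r * p * Jq ν f q) = (κ * p) * ((1/2) * (r * Jq ν f q)) := by
          ring
        have e2 : (κ * p) * (4*A*r^2 + (1/(4*A)) * I) =
            4 * κ * A * (r^2 * p) + (κ / A) * ((1/4) * (p * I)) := by
          field_simp
        calc (1/2) * κ * (r * p * Jq ν f q) = (κ * p) * ((1/2) * (r * Jq ν f q)) := e1
          _ ≤ (κ * p) * (4*A*r^2 + (1/(4*A)) * I) := h
          _ = 4 * κ * A * (r^2 * p) + (κ / A) * ((1/4) * (p * I)) := e2
      have hrhs_nonneg1 : 0 ≤ 4 * κ * A * GG γ ε n F q := by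
        unfold GG
        rw [if_pos hcond]
        have := transP_nonneg hγ0 (q.2 - q.1)
        positivity
      have hrhs_nonneg2 : 0 ≤ (κ / A) * ((1/4) * (transP γ (q.1 - q.2) * I)) := by
        have := transP_nonneg hγ0 (q.1 - q.2)
        positivity
      calc ENNReal.ofReal ((1/2) * κ * TT γ ε n ν f F q)
          ≤ ENNReal.ofReal (4 * κ * A * GG γ ε n F q
              + (κ / A) * ((1/4) * (transP γ (q.1 - q.2) * I))) :=
            ENNReal.ofReal_le_ofReal hreal
        _ = ENNReal.ofReal (4 * κ * A * GG γ ε n F q)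
              + ENNReal.ofReal ((κ / A) * ((1/4) * (transP γ (q.1 - q.2) * I))) :=
            ENNReal.ofReal_add hrhs_nonneg1 hrhs_nonneg2
        _ = ENNReal.ofReal (4 * κ * A * GG γ ε n F q)
              + ENNReal.ofReal (κ / A) *
                ((1/4) * (ENNReal.ofReal (transP γ (q.1 - q.2)) * Lq ν f q)) := by
            congr 1
            rw [hLe, ← ENNReal.ofReal_mul (transP_nonneg hγ0 _),
              show ((1:ℝ≥0∞)/4) = ENNReal.ofReal (1/4) by
                rw [ENNReal.ofReal_div_of_pos (by norm_num), ENNReal.ofReal_one,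
                  ENNReal.ofReal_ofNat],
              ← ENNReal.ofReal_mul (by norm_num),
              ← ENNReal.ofReal_mul (le_of_lt (div_pos hκ hA))]
  -- assemble
  have hDF : dirichletForm γ ν f
      = (1/4) * ∑' q : ℤ × ℤ, ENNReal.ofReal (transP γ (q.1 - q.2)) * Lq ν f q := rfl
  calc ENNReal.ofReal ((1/2) * κ * ∑ q ∈ s₀, TT γ ε n ν f F q)
      = ENNReal.ofReal (∑ q ∈ s₀, (1/2) * κ * TT γ ε n ν f F q) := by
        rw [Finset.mul_sum]
    _ ≤ ∑ q ∈ s₀, ENNReal.ofReal ((1/2) * κ * TT γ ε n ν f F q) := ofReal_sum_le _ _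
    _ ≤ ∑ q ∈ s₀, (ENNReal.ofReal (4 * κ * A * GG γ ε n F q)
          + ENNReal.ofReal (κ / A) *
            ((1/4) * (ENNReal.ofReal (transP γ (q.1 - q.2)) * Lq ν f q))) :=
        Finset.sum_le_sum fun q _ => key q
    _ = (∑ q ∈ s₀, ENNReal.ofReal (4 * κ * A * GG γ ε n F q))
          + ∑ q ∈ s₀, ENNReal.ofReal (κ / A) *
            ((1/4) * (ENNReal.ofReal (transP γ (q.1 - q.2)) * Lq ν f q)) :=
        Finset.sum_add_distrib
    _ ≤ ENNReal.ofReal (4 * κ * A * ∑ q ∈ s₀, GG γ ε n F q)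
          + ENNReal.ofReal (κ / A) * dirichletForm γ ν f := by
        have hGnn : ∀ q : ℤ × ℤ, 0 ≤ 4 * κ * A * GG γ ε n F q := by
          intro q
          unfold GG
          split
          · have := transP_nonneg hγ0 (q.2 - q.1)
            positivity
          · simp
        refine add_le_add ?_ ?_
        · rw [Finset.mul_sum, ENNReal.ofReal_sum_of_nonneg (fun q _ => hGnn q)]
        · rw [← Finset.mul_sum, ← Finset.mul_sum, hDF]
          exact mul_le_mul_right (mul_le_mul_right (ENNReal.sum_le_tsum s₀) _) _

/-- Young-type Dirichlet form estimate used in the energy estimate. -/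
theorem statement15 (γ b A ε : ℝ) (hγ : γ ∈ Set.Ioo (0 : ℝ) 2) (hb : b ∈ Set.Ioo (0 : ℝ) 1)
    (hA : 0 < A) (hε : 0 < ε) (n : ℕ) (hn : 1 ≤ n) (hεn : 1 ≤ ε * n)
    (ν : MeasureTheory.Measure Config) (hν : IsBernoulliProduct b ν)
    (f : Config → ℝ) (hf : Measurable f) (hf0 : ∀ η : Config, 0 ≤ f η)
    (hf1 : (∫ η, f η ∂ν) = 1)
    (F : ℝ × ℝ → ℝ) (hF : Continuous F) (hFc : HasCompactSupport F) :
    ENNReal.ofReal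
      ((1 / 2) * (n : ℝ) ^ (γ - 1) *
        ∑' q : ℤ × ℤ,
          if ε * n ≤ |(q.1 : ℝ) - (q.2 : ℝ)| then
            F ((q.1 : ℝ) / n, (q.2 : ℝ) / n) * transP γ (q.2 - q.1) *
              ∫ η, ind (η q.2) * ctilde q.1 q.2 η * (f η - f (swapConf q.1 q.2 η)) ∂ν
          else 0)
    ≤ ENNReal.ofReal
        (4 * (n : ℝ) ^ (γ - 1) * A *
          ∑' q : ℤ × ℤ,
            if ε * n ≤ |(q.1 : ℝ) - (q.2 : ℝ)| then
              F ((q.1 : ℝ) / n, (q.2 : ℝ) / n) ^ 2 * transP γ (q.2 - q.1)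
            else 0)
      + ENNReal.ofReal ((n : ℝ) ^ (γ - 1) / A) * dirichletForm γ ν f := by
  exact master γ b A ε hγ hb hA hε n hn hεn ν hν f hf hf0 hf1 F hF hFc
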